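/- A continuous piecewise affine function f: ℝ^n → ℝ that is convex equals the pointwise maximum of finitely many affine functions: there exist a_1,...,a_N ∈ ℝ^n and c_1,...,c_N ∈ ℝ such that f(x) = max_{i=1,...,N} (a_i·x + c_i) for all x ∈ ℝ^n. -/

import Mathlib

/-!
By Baire's theorem the pieces with nonempty interior have dense union. The affine function of
such a piece is a global minorant of `f`: their difference is convex and vanishes near an
interior point, which is therefore a global minimum. Hence `f` agrees with the maximum of these
finitely many affine functions on a dense set, and so everywhere by continuity.
-/

open Matrix

/-- A convex polyhedron in `ℝ^n`: a finite intersection of closed half-spaces. -/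
def IsPolyhedron {n : ℕ} (P : Set (Fin n → ℝ)) : Prop :=
  ∃ (k : ℕ) (a : Fin k → Fin n → ℝ) (c : Fin k → ℝ), P = {x | ∀ i, a i ⬝ᵥ x ≤ c i}

/-- A continuous piecewise affine function `ℝ^n → ℝ`: continuous, and there is a finite
collection of convex polyhedra covering `ℝ^n` on each of which `f` is affine. -/
def IsCPWA {n : ℕ} (f : (Fin n → ℝ) → ℝ) : Prop :=
  Continuous f ∧ ∃ (M : ℕ) (P : Fin M → Set (Fin n → ℝ)),
    (∀ i, IsPolyhedron (P i)) ∧ (⋃ i, P i) = Set.univ ∧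
    ∀ i, ∃ (a : Fin n → ℝ) (c : ℝ), ∀ x ∈ P i, f x = a ⬝ᵥ x + c

open Set Filter Topology

theorem IsPolyhedron.isClosed {n : ℕ} {P : Set (Fin n → ℝ)} (hP : IsPolyhedron P) :
    IsClosed P := by
  obtain ⟨k, a, c, rfl⟩ := hP
  simp only [ofPred_forall]
  exact isClosed_iInter fun i => isClosed_le (by fun_prop) continuous_const

theorem ConvexOn.le_of_eventuallyEq {E : Type*} [AddCommGroup E] [TopologicalSpace E]
    [Module ℝ E] [IsTopologicalAddGroup E] [ContinuousSMul ℝ E] {f g : E → ℝ}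
    (hf : ConvexOn ℝ univ f) (hg : ConcaveOn ℝ univ g) {p : E} (hfg : f =ᶠ[𝓝 p] g) (x : E) :
    g x ≤ f x := by
  have hmin : IsLocalMin (f - g) p := hfg.mono fun y hy => by simp [hy, hfg.eq_of_nhds]
  simpa [hfg.eq_of_nhds] using IsMinOn.of_isLocalMin_of_convex_univ hmin (hf.sub hg) x

theorem concaveOn_dotProduct_add_const {n : ℕ} (a : Fin n → ℝ) (c : ℝ) :
    ConcaveOn ℝ univ fun x => a ⬝ᵥ x + c :=
  ((dotProductBilin ℝ ℝ a).concaveOn convex_univ).add_const c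

theorem ConvexOn.exists_eq_finset_sup' {n : ℕ} {ι : Type*} [Fintype ι]
    {f : (Fin n → ℝ) → ℝ} (hconv : ConvexOn ℝ univ f) (hcont : Continuous f)
    {P : ι → Set (Fin n → ℝ)} (hclosed : ∀ i, IsClosed (P i)) (hcover : ⋃ i, P i = univ)
    {a : ι → Fin n → ℝ} {c : ι → ℝ} (haff : ∀ i, ∀ x ∈ P i, f x = a i ⬝ᵥ x + c i) :
    ∃ (s : Finset ι) (hs : s.Nonempty), ∀ x, f x = s.sup' hs fun i => a i ⬝ᵥ x + c i := by
  classical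
  have hdense : Dense (⋃ i, interior (P i)) := dense_iUnion_interior_of_closed hclosed hcover
  set fat := Finset.univ.filter fun i => (interior (P i)).Nonempty
  have mem_fat : ∀ {i x}, x ∈ interior (P i) → i ∈ fat := fun hx =>
    Finset.mem_filter.2 ⟨Finset.mem_univ _, _, hx⟩
  have hfat : fat.Nonempty := by
    obtain ⟨x, hx⟩ := hdense.nonempty
    obtain ⟨i, hi⟩ := mem_iUnion.1 hx
    exact ⟨i, mem_fat hi⟩
  refine ⟨fat, hfat, congrFun (hcont.ext_on hdense
    (Continuous.finset_sup'_apply hfat fun i _ => by fun_prop) fun x hx => ?_)⟩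
  obtain ⟨i, hi⟩ := mem_iUnion.1 hx
  refine le_antisymm ?_ (Finset.sup'_le _ _ fun j hj => ?_)
  · rw [haff i x (interior_subset hi)]
    exact Finset.le_sup' (fun i => a i ⬝ᵥ x + c i) (mem_fat hi)
  · obtain ⟨p, hp⟩ := (Finset.mem_filter.1 hj).2
    exact hconv.le_of_eventuallyEq (concaveOn_dotProduct_add_const _ _)
      (eventually_of_mem (mem_interior_iff_mem_nhds.1 hp) (haff j)) x

theorem Finset.exists_fin_succ_sup'_eq {ι : Type*} [LinearOrder ι] {s : Finset ι}
    (hs : s.Nonempty) : ∃ (N : ℕ) (e : Fin (N + 1) → ι),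
      ∀ {α : Type*} [SemilatticeSup α] (g : ι → α),
        s.sup' hs g = univ.sup' univ_nonempty (g ∘ e) := by
  obtain ⟨N, hN⟩ := Nat.exists_eq_add_one_of_ne_zero hs.card_pos.ne'
  refine ⟨N, s.orderEmbOfFin hN, fun g => ?_⟩
  rw [sup'_comp_eq_image]
  exact sup'_congr _ (s.image_orderEmbOfFin_univ hN).symm fun _ _ => rfl

/-- A convex continuous piecewise affine function `f : ℝ^n → ℝ` equals the
pointwise maximum of finitely many affine functions: there are `a_1,…,a_N ∈ ℝ^n` and
`c_1,…,c_N ∈ ℝ` with `f(x) = max_i (a_i ⬝ x + c_i)` for all `x`. -/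
theorem convex_cpwa_eq_max_affine (n : ℕ) (f : (Fin n → ℝ) → ℝ)
    (hf : IsCPWA f) (hconv : ConvexOn ℝ Set.univ f) :
    ∃ (N : ℕ) (a : Fin (N + 1) → Fin n → ℝ) (c : Fin (N + 1) → ℝ),
      ∀ x, f x = Finset.univ.sup' Finset.univ_nonempty (fun i => a i ⬝ᵥ x + c i) := by
  obtain ⟨hcont, M, P, hpoly, hcover, haff⟩ := hf
  choose a c haff using haff
  obtain ⟨s, hs, hmax⟩ :=
    hconv.exists_eq_finset_sup' hcont (fun i => (hpoly i).isClosed) hcover haff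
  obtain ⟨N, e, he⟩ := s.exists_fin_succ_sup'_eq hs
  exact ⟨N, a ∘ e, c ∘ e, fun x => (hmax x).trans (he _)⟩
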